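/- Let R = 𝔽₂[b₁, b₂, e₃, c₄, c₅, …][ρ, x₁, x₂, w]/(x₂² + x₁²b₁). For every r ∈ R, if r·ρx₁²w lies in the principal ideal (x₁³w), then r lies in the principal ideal (x₁). Consequently, the annihilator of the class of ρx₁²w in the quotient ring R/(x₁³w) is exactly the principal ideal generated by x₁. -/

import Mathlib

/-!
The ambient polynomial ring has variable set `ℕ ⊕ Fin 4` (`Sum.inl 0, 1, 2 = b₁, b₂, e₃`,
`Sum.inl (k+3) = c_{k+4}`; `Sum.inr 0,…,3 = ρ, x₁, x₂, w`).

Lift `r·ρx₁²w ∈ (x₁³w)` to the polynomial ring: `x₁²(pρw - x₁wq) = (x₂² + x₁²b₁)s`. As `x₁` is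
prime and does not divide `x₂² + x₁²b₁`, we may cancel `x₁²`. Setting `x₁ = 0` then gives
`p(0)·ρw = x₂²·s'(0)`, and since the prime `x₂` does not divide `ρw`, `x₂² ∣ p(0)`. So
`p ∈ (x₁, x₂²) = (x₁, x₂² + x₁²b₁)`, i.e. `r ∈ (x₁)`. The annihilator statement is the same
computation read in `R/(x₁³w)`.
-/

open MvPolynomial

set_option synthInstance.maxHeartbeats 1000000
set_option maxHeartbeats 1000000

noncomputable section

namespace Stmt13

abbrev P := MvPolynomial (ℕ ⊕ Fin 4) (ZMod 2)

def b₁ : P := X (Sum.inl 0)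
def b₂ : P := X (Sum.inl 1)
def e₃ : P := X (Sum.inl 2)
def c (k : ℕ) : P := X (Sum.inl (k + 3))   -- `c k` is `c_{k+4}`
def ρ : P := X (Sum.inr 0)
def x₁ : P := X (Sum.inr 1)
def x₂ : P := X (Sum.inr 2)
def w : P := X (Sum.inr 3)

def J : Ideal P := Ideal.span {x₂ ^ 2 + x₁ ^ 2 * b₁}

abbrev R := P ⧸ J

def mk : P →+* R := Ideal.Quotient.mk J

def I : Ideal R := Ideal.span {mk (x₁ ^ 3 * w)}

abbrev E := R ⧸ I

def mkE : R →+* E := Ideal.Quotient.mk I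

section KillX

variable {σ A : Type*} [CommRing A] [DecidableEq σ]

def killX (i : σ) : MvPolynomial σ A →ₐ[A] MvPolynomial σ A :=
  aeval (Function.update X i 0)

@[simp]
lemma killX_X_self (i : σ) : killX i (X i : MvPolynomial σ A) = 0 := by
  simp [killX]

@[simp]
lemma killX_X_of_ne {i j : σ} (h : j ≠ i) : killX i (X j : MvPolynomial σ A) = X j := by
  simp [killX, h]

lemma X_dvd_sub_killX (i : σ) (f : MvPolynomial σ A) : X i ∣ f - killX i f := by
  set π := Ideal.Quotient.mkₐ A (Ideal.span {(X i : MvPolynomial σ A)})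
  have hπ : π.comp (killX i) = π := by
    refine algHom_ext fun j => ?_
    by_cases hj : j = i
    · subst hj
      simp [π]
    · simp [hj]
  rw [← Ideal.mem_span_singleton, ← Ideal.Quotient.eq, ← Ideal.Quotient.mkₐ_eq_mk A,
    ← AlgHom.comp_apply, hπ]

end KillX

lemma quotient_mul_mk_eq_zero_iff {A : Type*} [CommRing A] {𝔞 𝔟 : Ideal A} {a : A}
    (h : ∀ r, r * a ∈ 𝔞 ↔ r ∈ 𝔟) (e : A ⧸ 𝔞) :
    e * Ideal.Quotient.mk 𝔞 a = 0 ↔ e ∈ 𝔟.map (Ideal.Quotient.mk 𝔞) := by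
  obtain ⟨r, rfl⟩ := Ideal.Quotient.mk_surjective e
  have h𝔞𝔟 : 𝔞 ≤ 𝔟 := fun r hr => (h r).1 (𝔞.mul_mem_right a hr)
  rw [← map_mul, Ideal.Quotient.eq_zero_iff_mem, h, Ideal.mem_quotient_iff_mem h𝔞𝔟]

def rel : P := x₂ ^ 2 + x₁ ^ 2 * b₁

lemma J_eq_span_rel : J = Ideal.span {rel} := rfl

lemma mk_rel : mk rel = 0 :=
  Ideal.Quotient.eq_zero_iff_mem.2 (Ideal.mem_span_singleton_self _)

lemma x₁_prime : Prime x₁ := X_prime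

lemma x₂_prime : Prime x₂ := X_prime

lemma not_x₁_dvd_rel : ¬ x₁ ∣ rel := by
  intro h
  have hx₂ : x₁ ∣ x₂ ^ 2 := by
    simpa [rel] using dvd_sub h (Dvd.intro _ (by ring : x₁ * (x₁ * b₁) = x₁ ^ 2 * b₁))
  simpa [x₁, x₂] using x₁_prime.dvd_of_dvd_pow hx₂

lemma not_x₂_dvd_ρ_mul_w : ¬ x₂ ∣ ρ * w := by
  intro h
  rcases x₂_prime.dvd_or_dvd h with h | h <;> simp [x₂, ρ, w] at h

abbrev killX₁ : P →ₐ[ZMod 2] P := killX (Sum.inr 1)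

@[simp]
lemma killX₁_x₁ : killX₁ x₁ = 0 := killX_X_self _

@[simp]
lemma killX₁_ρ : killX₁ ρ = ρ := killX_X_of_ne (by decide)

@[simp]
lemma killX₁_w : killX₁ w = w := killX_X_of_ne (by decide)

lemma killX₁_rel : killX₁ rel = x₂ ^ 2 := by
  simp [rel, x₂, b₁]

lemma exists_eq_x₁_mul_add_x₂_sq_mul {p q s : P}
    (h : rel * s = x₁ ^ 2 * (p * ρ * w - x₁ * w * q)) : ∃ u t, p = x₁ * u + x₂ ^ 2 * t := by
  obtain ⟨s', rfl⟩ : x₁ ^ 2 ∣ s := x₁_prime.pow_dvd_of_dvd_mul_left 2 not_x₁_dvd_rel ⟨_, h⟩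
  have h' : rel * s' = p * ρ * w - x₁ * w * q :=
    mul_left_cancel₀ (pow_ne_zero 2 x₁_prime.ne_zero) (by linear_combination h)
  have hkill : killX₁ p * (ρ * w) = x₂ ^ 2 * killX₁ s' := by
    have := congrArg killX₁ h'
    simp only [map_mul, map_sub, killX₁_rel, killX₁_x₁, killX₁_ρ, killX₁_w] at this
    linear_combination -this
  obtain ⟨t, ht⟩ := x₂_prime.pow_dvd_of_dvd_mul_right 2 not_x₂_dvd_ρ_mul_w ⟨_, hkill⟩
  obtain ⟨u, hu⟩ : x₁ ∣ p - killX₁ p := X_dvd_sub_killX _ p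
  exact ⟨u, t, by linear_combination hu + ht⟩

lemma mk_x₂_sq_mem : mk (x₂ ^ 2) ∈ Ideal.span {mk x₁} := by
  have h : mk (x₂ ^ 2) = mk x₁ * -mk (x₁ * b₁) := by
    have := mk_rel
    simp only [rel, map_add, map_mul, map_pow] at this ⊢
    linear_combination this
  rw [h]
  exact Ideal.mul_mem_right _ _ (Ideal.mem_span_singleton_self _)

lemma mul_mk_mem_span_iff (r : R) :
    r * mk (ρ * x₁ ^ 2 * w) ∈ Ideal.span {mk (x₁ ^ 3 * w)} ↔ r ∈ Ideal.span {mk x₁} := by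
  refine ⟨fun hr => ?_, fun hr => ?_⟩
  · obtain ⟨p, rfl⟩ := Ideal.Quotient.mk_surjective (I := J) r
    obtain ⟨c, hc⟩ := Ideal.mem_span_singleton'.1 hr
    obtain ⟨q, rfl⟩ := Ideal.Quotient.mk_surjective (I := J) c
    obtain ⟨s, hs⟩ : rel ∣ p * (ρ * x₁ ^ 2 * w) - q * (x₁ ^ 3 * w) := by
      rw [← Ideal.mem_span_singleton, ← J_eq_span_rel, ← Ideal.Quotient.eq]
      simpa [mk] using hc.symm
    obtain ⟨u, t, rfl⟩ := exists_eq_x₁_mul_add_x₂_sq_mul (p := p) (q := q) (s := s)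
      (by linear_combination -hs)
    rw [show Ideal.Quotient.mk J (x₁ * u + x₂ ^ 2 * t) = mk x₁ * mk u + mk (x₂ ^ 2) * mk t by
      simp [mk]]
    exact Ideal.add_mem _ (Ideal.mul_mem_right _ _ (Ideal.mem_span_singleton_self _))
      (Ideal.mul_mem_right _ _ mk_x₂_sq_mem)
  · obtain ⟨d, rfl⟩ := Ideal.mem_span_singleton'.1 hr
    refine Ideal.mem_span_singleton'.2 ⟨d * mk ρ, ?_⟩
    simp only [map_mul, map_pow]
    ring

theorem stmt_13 :
    (∀ r : R, r * mk (ρ * x₁ ^ 2 * w) ∈ Ideal.span {mk (x₁ ^ 3 * w)} →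
      r ∈ Ideal.span {mk x₁}) ∧
    (∀ e : E, e * mkE (mk (ρ * x₁ ^ 2 * w)) = 0 ↔
      e ∈ Ideal.span {mkE (mk x₁)}) := by
  refine ⟨fun r => (mul_mk_mem_span_iff r).1, fun e => ?_⟩
  rw [← Set.image_singleton, ← Ideal.map_span]
  exact quotient_mul_mk_eq_zero_iff mul_mk_mem_span_iff e

end Stmt13

end
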